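/- tr(C̃S) ≤ wu/b, and tr(C̃⁺S) ≥ w(b − 1)²/(bu). -/

import Mathlib

open Matrix BigOperators

lemma psd_cs {n : ℕ} {C : Matrix (Fin n) (Fin n) ℝ} (hC : C.PosSemidef)
    (x y : Fin n → ℝ) :
    (x ⬝ᵥ C *ᵥ y) ^ 2 ≤ (x ⬝ᵥ C *ᵥ x) * (y ⬝ᵥ C *ᵥ y) := by
  have hCt : Cᵀ = C := by
    ext i j
    have := congrFun (congrFun hC.1 i) j
    simpa [Matrix.conjTranspose_apply] using this
  have hsym : ∀ u v : Fin n → ℝ, u ⬝ᵥ C *ᵥ v = v ⬝ᵥ C *ᵥ u := by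
    intro u v
    rw [Matrix.dotProduct_mulVec]
    conv_lhs => rw [← hCt]
    rw [Matrix.vecMul_transpose, dotProduct_comm]
  have key : ∀ t : ℝ, 0 ≤ (y ⬝ᵥ C *ᵥ y) * (t * t) + (2 * (x ⬝ᵥ C *ᵥ y)) * t
      + (x ⬝ᵥ C *ᵥ x) := by
    intro t
    have h0 := hC.dotProduct_mulVec_nonneg (x + t • y)
    have e : (x + t • y) ⬝ᵥ C *ᵥ (x + t • y)
        = (x ⬝ᵥ C *ᵥ x) + t * (x ⬝ᵥ C *ᵥ y) + t * (y ⬝ᵥ C *ᵥ x)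
          + t * t * (y ⬝ᵥ C *ᵥ y) := by
      simp [Matrix.mulVec_add, Matrix.mulVec_smul, dotProduct_add, add_dotProduct,
        dotProduct_smul, smul_dotProduct, smul_eq_mul]
      ring
    rw [star_trivial, e, hsym y x] at h0
    linarith
  have h := discrim_le_zero key
  rw [discrim] at h
  nlinarith [h]

lemma pinv_unique {n : ℕ} {C A B : Matrix (Fin n) (Fin n) ℝ}
    (a1 : C * A * C = C) (a2 : A * C * A = A) (a3 : (C * A)ᵀ = C * A) (a4 : (A * C)ᵀ = A * C)
    (b1 : C * B * C = C) (b2 : B * C * B = B) (b3 : (C * B)ᵀ = C * B) (b4 : (B * C)ᵀ = B * C) :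
    A = B := by
  have step1 : A * C = B * C := by
    have h1 : B * C * (A * C) = B * C := by
      rw [Matrix.mul_assoc B C (A * C), ← Matrix.mul_assoc C A C, a1]
    calc A * C = A * (C * B * C) := by rw [b1]
    _ = (A * C) * (B * C) := by simp only [Matrix.mul_assoc]
    _ = (A * C)ᵀ * (B * C)ᵀ := by rw [a4, b4]
    _ = (B * C * (A * C))ᵀ := by rw [Matrix.transpose_mul (B * C) (A * C)]
    _ = (B * C)ᵀ := by rw [h1]
    _ = B * C := b4
  have step2 : C * A = C * B := by
    have h2 : (C * A) * (C * B) = C * B := by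
      rw [← Matrix.mul_assoc (C * A) C B, a1]
    calc C * A = (C * B * C) * A := by rw [b1]
    _ = (C * B) * (C * A) := by simp only [Matrix.mul_assoc]
    _ = (C * B)ᵀ * (C * A)ᵀ := by rw [a3, b3]
    _ = ((C * A) * (C * B))ᵀ := by rw [Matrix.transpose_mul (C * A) (C * B)]
    _ = (C * B)ᵀ := by rw [h2]
    _ = C * B := b3
  calc A = A * C * A := a2.symm
  _ = A * (C * A) := by rw [Matrix.mul_assoc]
  _ = A * (C * B) := by rw [step2]
  _ = (A * C) * B := by rw [Matrix.mul_assoc]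
  _ = (B * C) * B := by rw [step1]
  _ = B := b2

lemma pinv_symm {n : ℕ} {C A : Matrix (Fin n) (Fin n) ℝ} (hC : Cᵀ = C)
    (a1 : C * A * C = C) (a2 : A * C * A = A) (a3 : (C * A)ᵀ = C * A) (a4 : (A * C)ᵀ = A * C) :
    Aᵀ = A := by
  have hCB : C * Aᵀ = A * C := by
    calc C * Aᵀ = (A * Cᵀ)ᵀ := by rw [Matrix.transpose_mul, Matrix.transpose_transpose]
    _ = (A * C)ᵀ := by rw [hC]
    _ = A * C := a4
  have hBC : Aᵀ * C = C * A := by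
    calc Aᵀ * C = (Cᵀ * A)ᵀ := by rw [Matrix.transpose_mul, Matrix.transpose_transpose]
    _ = (C * A)ᵀ := by rw [hC]
    _ = C * A := a3
  have b1 : C * Aᵀ * C = C := by
    have h : (C * Aᵀ * C)ᵀ = C := by
      rw [Matrix.transpose_mul, Matrix.transpose_mul, Matrix.transpose_transpose, hC,
        ← Matrix.mul_assoc, a1]
    calc C * Aᵀ * C = ((C * Aᵀ * C)ᵀ)ᵀ := (Matrix.transpose_transpose _).symm
    _ = Cᵀ := by rw [h]
    _ = C := hC
  have b2 : Aᵀ * C * Aᵀ = Aᵀ := by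
    have h : (Aᵀ * C * Aᵀ)ᵀ = A := by
      rw [Matrix.transpose_mul, Matrix.transpose_mul, Matrix.transpose_transpose,
        hC, ← Matrix.mul_assoc, a2]
    calc Aᵀ * C * Aᵀ = ((Aᵀ * C * Aᵀ)ᵀ)ᵀ := (Matrix.transpose_transpose _).symm
    _ = Aᵀ := by rw [h]
  have b3 : (C * Aᵀ)ᵀ = C * Aᵀ := by rw [hCB]; exact a4
  have b4 : (Aᵀ * C)ᵀ = Aᵀ * C := by rw [hBC]; exact a3
  exact (pinv_unique a1 a2 a3 a4 b1 b2 b3 b4).symm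

set_option maxHeartbeats 1000000 in
/-- Inequality (8) and its key step: `tr(C̃S) ≤ wu/b` and `tr(C̃⁺S) ≥ w(b − 1)²/(bu)`. -/
theorem stmt9
    (u b k : ℕ) (hu : 0 < u) (hb : 3 ≤ b) (hk : 1 ≤ k) (hub : b - 1 ≤ u)
    (w : ℕ) (hw : 2 * u + w = b * k) (hw1 : 1 ≤ w)
    (s : Fin b → ℕ) (hs : ∀ j, s j ≤ k - 1) (hssum : ∑ j, s j = w)
    (N : Matrix (Fin u) (Fin b) ℕ)
    (hrow : ∀ i, ∑ j, N i j = 2)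
    (hcol : ∀ j, ∑ i, N i j = k - s j)
    (Nr : Matrix (Fin u) (Fin b) ℝ) (hNr : Nr = N.map (Nat.cast : ℕ → ℝ))
    (S : Matrix (Fin b) (Fin b) ℝ) (hS : S = Matrix.diagonal fun j => (s j : ℝ))
    (Ct : Matrix (Fin b) (Fin b) ℝ)
    (hCt : Ct = (k : ℝ) • (1 : Matrix (Fin b) (Fin b) ℝ) - S - (1/2 : ℝ) • (Nrᵀ * Nr))
    (hCtpsd : Ct.PosSemidef)
    (hCtker : ∀ x : Fin b → ℝ, Ct.mulVec x = 0 ↔ ∃ c : ℝ, x = fun _ => c)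
    (Ctp : Matrix (Fin b) (Fin b) ℝ)
    (hCtp1 : Ct * Ctp * Ct = Ct) (hCtp2 : Ctp * Ct * Ctp = Ctp)
    (hCtp3 : (Ct * Ctp)ᵀ = Ct * Ctp) (hCtp4 : (Ctp * Ct)ᵀ = Ctp * Ct) :
    (Ct * S).trace ≤ (w : ℝ) * (u : ℝ) / (b : ℝ) ∧
      (w : ℝ) * ((b : ℝ) - 1) ^ 2 / ((b : ℝ) * (u : ℝ)) ≤ (Ctp * S).trace := by
  -- basic positivity
  have hb0 : (0:ℝ) < b := by positivity
  have hu0 : (0:ℝ) < u := by exact_mod_cast hu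
  have hw0 : (0:ℝ) < w := by exact_mod_cast hw1
  have hb3 : (3:ℝ) ≤ b := by exact_mod_cast hb
  have hwcast : 2 * (u:ℝ) + w = (b:ℝ) * k := by exact_mod_cast hw
  have hsk : ∀ j, s j ≤ k := fun j => le_trans (hs j) (Nat.sub_le k 1)
  -- diagonal entries of Ct
  have haval : ∀ j, Ct j j = (k:ℝ) - s j - (1/2) * ∑ i, (N i j : ℝ) * N i j := by
    intro j
    rw [hCt, hS, hNr]
    simp [Matrix.sub_apply, Matrix.smul_apply, Matrix.one_apply_eq,
      Matrix.diagonal_apply_eq, Matrix.mul_apply, Matrix.transpose_apply,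
      Matrix.map_apply, smul_eq_mul]
  have hcolr : ∀ j, ∑ i, (N i j : ℝ) = (k:ℝ) - s j := by
    intro j
    rw [← Nat.cast_sum, hcol j, Nat.cast_sub (hsk j)]
  have habound : ∀ j, Ct j j ≤ ((k:ℝ) - s j) / 2 := by
    intro j
    rw [haval j]
    have h1 : (k:ℝ) - s j ≤ ∑ i, (N i j : ℝ) * N i j := by
      rw [← hcolr j]
      apply Finset.sum_le_sum
      intro i _
      rcases Nat.eq_zero_or_pos (N i j) with h | h
      · simp [h]
      · have : (1:ℝ) ≤ (N i j : ℝ) := by exact_mod_cast h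
        nlinarith
    linarith
  -- trace formulas
  have trace1 : (Ct * S).trace = ∑ j, Ct j j * (s j : ℝ) := by
    rw [hS]
    simp [Matrix.trace, Matrix.diag, Matrix.mul_diagonal]
  have trace2 : (Ctp * S).trace = ∑ j, Ctp j j * (s j : ℝ) := by
    rw [hS]
    simp [Matrix.trace, Matrix.diag, Matrix.mul_diagonal]
  have hssumr : ∑ j, (s j : ℝ) = (w : ℝ) := by exact_mod_cast congrArg (Nat.cast : ℕ → ℝ) hssum
  -- Cauchy–Schwarz : w² ≤ b * Σ s_j²
  have hsq : ((w:ℝ))^2 ≤ (b:ℝ) * ∑ j, (s j : ℝ)^2 := by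
    have := sq_sum_le_card_mul_sum_sq (s := (Finset.univ : Finset (Fin b)))
      (f := fun j => (s j : ℝ))
    simpa [hssumr, Finset.card_univ] using this
  -- Part 1
  have part1 : ∑ j, Ct j j * (s j : ℝ) ≤ (w:ℝ) * u / b := by
    have step : ∑ j, Ct j j * (s j : ℝ) ≤ ∑ j, ((k:ℝ) - s j) / 2 * s j := by
      apply Finset.sum_le_sum
      intro j _
      exact mul_le_mul_of_nonneg_right (habound j) (Nat.cast_nonneg _)
    have expand : ∑ j, ((k:ℝ) - s j) / 2 * s j
        = ((k:ℝ) * w - ∑ j, (s j : ℝ)^2) / 2 := by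
      have e1 : ∀ j : Fin b, ((k:ℝ) - s j) / 2 * s j = ((k:ℝ) * s j - (s j : ℝ)^2) / 2 := by
        intro j; ring
      rw [Finset.sum_congr rfl (fun j _ => e1 j), ← Finset.sum_div]
      congr 1
      rw [Finset.sum_sub_distrib, ← Finset.mul_sum, hssumr]
    rw [expand] at step
    have goal2 : ((k:ℝ) * w - ∑ j, (s j : ℝ)^2) / 2 ≤ (w:ℝ) * u / b := by
      rw [div_le_div_iff₀ (by norm_num) hb0]
      nlinarith [hsq, hwcast]
    linarith
  have htr1 : (Ct * S).trace ≤ (w:ℝ) * u / b := by rw [trace1]; exact part1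
  refine ⟨htr1, ?_⟩
  -- Part 2
  have hCtsym : Ctᵀ = Ct := by
    ext i j
    have := congrFun (congrFun hCtpsd.1 i) j
    simpa [Matrix.conjTranspose_apply] using this
  have hCtpsym : Ctpᵀ = Ctp := pinv_symm hCtsym hCtp1 hCtp2 hCtp3 hCtp4
  have hCP : Ct * (Ct * Ctp) = Ct := by
    have h : (Ct * (Ct * Ctp))ᵀ = Ct := by
      rw [Matrix.transpose_mul, hCtp3, hCtsym, hCtp1]
    calc Ct * (Ct * Ctp) = ((Ct * (Ct * Ctp))ᵀ)ᵀ := (Matrix.transpose_transpose _).symm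
    _ = Ctᵀ := by rw [h]
    _ = Ct := hCtsym
  have hone : Ct *ᵥ (fun _ => (1:ℝ)) = 0 := (hCtker _).mpr ⟨1, rfl⟩
  have hP1 : (Ct * Ctp) *ᵥ (fun _ => (1:ℝ)) = 0 := by
    rw [← hCtp3, Matrix.transpose_mul, hCtsym, hCtpsym, ← Matrix.mulVec_mulVec, hone,
      Matrix.mulVec_zero]
  -- diagonal of the projection P = Ct * Ctp
  have hPdiag : ∀ j, (Ct * Ctp) j j = 1 - 1 / (b:ℝ) := by
    intro j
    set e : Fin b → ℝ := Pi.single j 1 with he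
    set y : Fin b → ℝ := (Ct * Ctp) *ᵥ e with hy
    have hker : Ct *ᵥ (y - e) = 0 := by
      rw [Matrix.mulVec_sub, hy, Matrix.mulVec_mulVec, hCP, sub_self]
    obtain ⟨c, hc⟩ := (hCtker _).mp hker
    have hyc : ∀ i, y i = e i + c := by
      intro i
      have := congrFun hc i
      simp only [Pi.sub_apply] at this
      linarith
    have colsum : ∑ i, y i = 0 := by
      have h1 : ∀ i, y i = ((Ct * Ctp) *ᵥ e) i := fun i => rfl
      have h2 : ∑ i, y i = ((fun _ => (1:ℝ)) ⬝ᵥ y) := by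
        simp [dotProduct]
      rw [h2, hy, Matrix.dotProduct_mulVec, ← Matrix.mulVec_transpose, hCtp3, hP1]
      simp
    have hsum2 : ∑ i, (e i + c) = 1 + (b:ℝ) * c := by
      rw [Finset.sum_add_distrib]
      simp [he, Finset.card_univ]
    have hcval : c = -(1 / (b:ℝ)) := by
      have : (0:ℝ) = 1 + (b:ℝ) * c := by
        rw [← colsum]
        rw [Finset.sum_congr rfl (fun i _ => hyc i), hsum2]
      field_simp at this ⊢
      linarith
    have : (Ct * Ctp) j j = y j := by
      rw [hy]
      simp [he]
    rw [this, hyc j, hcval, he]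
    simp only [Pi.single_eq_same]
    ring
  -- Cauchy–Schwarz per coordinate
  have hdot : ∀ (M : Matrix (Fin b) (Fin b) ℝ) j,
      (Pi.single j (1:ℝ)) ⬝ᵥ M *ᵥ (Pi.single j (1:ℝ)) = M j j := by
    intro M j
    simp [single_dotProduct, Matrix.mulVec_single]
  have hdot2 : ∀ (A B : Matrix (Fin b) (Fin b) ℝ) j,
      (A *ᵥ Pi.single j (1:ℝ)) ⬝ᵥ (B *ᵥ Pi.single j (1:ℝ)) = (Aᵀ * B) j j := by
    intro A B j
    simp [dotProduct, Matrix.mulVec_single, Matrix.mul_apply, Matrix.transpose_apply]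
  have hqd : ∀ j, (1 - 1/(b:ℝ))^2 ≤ Ct j j * Ctp j j := by
    intro j
    have h := psd_cs hCtpsd (Pi.single j 1) (Ctp *ᵥ Pi.single j 1)
    have e1 : (Pi.single j (1:ℝ)) ⬝ᵥ Ct *ᵥ (Ctp *ᵥ Pi.single j 1) = (Ct * Ctp) j j := by
      rw [Matrix.mulVec_mulVec, hdot]
    have e2 : (Pi.single j (1:ℝ)) ⬝ᵥ Ct *ᵥ (Pi.single j 1) = Ct j j := hdot Ct j
    have e3 : (Ctp *ᵥ Pi.single j 1) ⬝ᵥ Ct *ᵥ (Ctp *ᵥ Pi.single j 1) = Ctp j j := by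
      rw [Matrix.mulVec_mulVec, hdot2 Ctp (Ct * Ctp) j, hCtpsym, ← Matrix.mul_assoc, hCtp2]
    rw [e1, e2, e3, hPdiag j] at h
    exact h
  have hq0 : (0:ℝ) < 1 - 1/(b:ℝ) := by
    rw [sub_pos, div_lt_one hb0]
    linarith
  have hapos : ∀ j, 0 < Ct j j := by
    intro j
    have hnn : 0 ≤ Ct j j := by
      have := hCtpsd.dotProduct_mulVec_nonneg (Pi.single j 1)
      rwa [star_trivial, hdot Ct j] at this
    rcases lt_or_eq_of_le hnn with h | h
    · exact h
    · exfalso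
      have := hqd j
      rw [← h, zero_mul] at this
      nlinarith
  have hdpos : ∀ j, (1 - 1/(b:ℝ))^2 / Ct j j ≤ Ctp j j := by
    intro j
    rw [div_le_iff₀ (hapos j)]
    have := hqd j
    nlinarith
  -- T = tr(Ct S), F = Σ s_j / Ct_jj
  set T : ℝ := ∑ j, Ct j j * (s j : ℝ) with hT
  set F : ℝ := ∑ j, (s j : ℝ) / Ct j j with hF
  have hTpos : 0 < T := by
    obtain ⟨j0, hj0⟩ : ∃ j, 0 < s j := by
      by_contra h
      push_neg at h
      have : ∀ j, s j = 0 := fun j => Nat.le_zero.mp (h j)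
      rw [Finset.sum_congr rfl (fun j _ => this j)] at hssum
      simp at hssum
      omega
    have h1 : (0:ℝ) < Ct j0 j0 * s j0 := by
      apply mul_pos (hapos j0)
      exact_mod_cast hj0
    have h2 : ∀ j ∈ Finset.univ, (0:ℝ) ≤ Ct j j * s j := by
      intro j _
      exact mul_nonneg (hapos j).le (Nat.cast_nonneg _)
    exact lt_of_lt_of_le h1 (Finset.single_le_sum h2 (Finset.mem_univ j0))
  -- Cauchy–Schwarz : w² ≤ F * T
  have hCS2 : ((w:ℝ))^2 ≤ F * T := by
    rw [← hssumr, hF, hT]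
    apply Finset.sum_sq_le_sum_mul_sum_of_sq_eq_mul
    · intro j _
      exact div_nonneg (Nat.cast_nonneg _) (hapos j).le
    · intro j _
      exact mul_nonneg (hapos j).le (Nat.cast_nonneg _)
    · intro j _
      have he : (s j:ℝ) / Ct j j * (Ct j j * s j) = (s j:ℝ)^2 * (Ct j j / Ct j j) := by
        ring
      rw [he, div_self (hapos j).ne', mul_one]
  -- lower bound for trace of Ctp * S
  have step1 : (1 - 1/(b:ℝ))^2 * F ≤ ∑ j, Ctp j j * (s j : ℝ) := by
    rw [hF, Finset.mul_sum]
    apply Finset.sum_le_sum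
    intro j _
    have h1 : (1 - 1/(b:ℝ))^2 * ((s j : ℝ) / Ct j j)
        = ((1 - 1/(b:ℝ))^2 / Ct j j) * (s j : ℝ) := by
      field_simp
    rw [h1]
    exact mul_le_mul_of_nonneg_right (hdpos j) (Nat.cast_nonneg _)
  have hFlow : ((w:ℝ))^2 / T ≤ F := by
    rw [div_le_iff₀ hTpos]
    exact hCS2
  have hTle : T ≤ (w:ℝ) * u / b := part1
  have hfinal : (w:ℝ) * ((b:ℝ) - 1)^2 / ((b:ℝ) * u) ≤ (1 - 1/(b:ℝ))^2 * (((w:ℝ))^2 / T) := by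
    have h1 : ((w:ℝ))^2 / ((w:ℝ) * u / b) ≤ ((w:ℝ))^2 / T := by
      apply div_le_div_of_nonneg_left (by positivity) hTpos hTle
    have h2 : (w:ℝ) * ((b:ℝ) - 1)^2 / ((b:ℝ) * u)
        = (1 - 1/(b:ℝ))^2 * (((w:ℝ))^2 / ((w:ℝ) * u / b)) := by
      field_simp
    rw [h2]
    exact mul_le_mul_of_nonneg_left h1 (by positivity)
  rw [trace2]
  calc (w:ℝ) * ((b:ℝ) - 1)^2 / ((b:ℝ) * u)
      ≤ (1 - 1/(b:ℝ))^2 * (((w:ℝ))^2 / T) := hfinal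
  _ ≤ (1 - 1/(b:ℝ))^2 * F := mul_le_mul_of_nonneg_left hFlow (by positivity)
  _ ≤ ∑ j, Ctp j j * (s j : ℝ) := step1
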